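/- For every coherent sequence (ω_n)_n ∈ Ω and all indices n ≤ k: (i) the word φ_n∘φ_{n+1}∘⋯∘φ_{k−1}(ω'_k), regarded as a finite sequence of letters, is a sublist (subsequence, not necessarily contiguous) of ω_n; and (ii) φ_n∘φ_{n+1}∘⋯∘φ_{k−1}(ω'_k) is a sublist of φ_n∘φ_{n+1}∘⋯∘φ_{k−1}∘φ_k(ω'_{k+1}). (For n = k the composite of the φ's is the identity.) -/

import Mathlib

open Classical
noncomputable section

namespace GCG

/-- One-step backtrack reduction of a word: replace some substring `u v u` by `u`. -/
def ReduceStep {V : Type*} (l r : List V) : Prop :=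
  ∃ (p s : List V) (u v : V), l = p ++ [u, v, u] ++ s ∧ r = p ++ [u] ++ s

/-- A word is reduced if it admits no one-step reduction. -/
def IsReduced {V : Type*} (l : List V) : Prop := ∀ r, ¬ ReduceStep l r

/-- The reduction `ω'` of a word: the (for words in a simple graph, unique) reduced
word obtained from it by repeatedly replacing substrings `u v u` by `u`. -/
def reduce {V : Type*} (l : List V) : List V :=
  if h : ∃ r, Relation.ReflTransGen ReduceStep l r ∧ IsReduced r then h.choose else l

/-- Compress every maximal constant substring `u u ⋯ u` to the single letter `u`. -/
def compress {V : Type*} : List V → List V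
  | [] => []
  | [a] => [a]
  | a :: b :: t => if a = b then compress (b :: t) else a :: compress (b :: t)

/-- Delete–Replace–Compress along `f`: delete the letters sent into `S`
(the subdivision points), replace the remaining letters by their images,
and compress maximal constant substrings. -/
def DRC {V' V S : Type*} (f : V' → V ⊕ S) (w : List V') : List V :=
  compress (w.filterMap fun v => (f v).getLeft?)

/-- A word in a simple graph: a finite list of vertices in which consecutive
letters are distinct and joined by an edge. -/
def IsWord {V : Type*} (G : SimpleGraph V) (l : List V) : Prop := l.Chain' G.Adj

/-- A loop word at `x`: a word that starts and ends with `x`. -/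
def IsLoopWord {V : Type*} (G : SimpleGraph V) (x : V) (l : List V) : Prop :=
  l.Chain' G.Adj ∧ l.head? = some x ∧ l.getLast? = some x

/-- Concatenation of loop words: the duplicated base letter is dropped. -/
def lconcat {V : Type*} (ω ξ : List V) : List V := ω.dropLast ++ ξ

/-- `Gs` (on vertex set `V ⊕ S`) is the subdivision of `G` in which every edge is
evenly subdivided into `d` edges: every edge of `G` is replaced by a path of
length `d` through fresh interior vertices from `S`, these paths are compatible
with edge reversal, their interiors are pairwise disjoint, they exhaust `S`, and
their steps are exactly the edges of `Gs`. -/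
def IsEvenSubdivision {V S : Type*} (G : SimpleGraph V) (d : ℕ)
    (Gs : SimpleGraph (V ⊕ S)) : Prop :=
  ∃ P : G.Dart → Fin (d + 1) → V ⊕ S,
    (∀ e, P e 0 = Sum.inl e.toProd.1) ∧
    (∀ e, P e (Fin.last d) = Sum.inl e.toProd.2) ∧
    (∀ e (i : Fin (d + 1)), 0 < i.val → i.val < d → ∃ s : S, P e i = Sum.inr s) ∧
    (∀ e, Function.Injective (P e)) ∧
    (∀ e (i : Fin (d + 1)), P e.symm i = P e i.rev) ∧
    (∀ s : S, ∃ e i, P e i = Sum.inr s) ∧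
    (∀ e e' (i i' : Fin (d + 1)), 0 < i.val → i.val < d → P e i = P e' i' →
      (e' = e ∧ i' = i) ∨ (e' = e.symm ∧ i' = i.rev)) ∧
    (∀ a b, Gs.Adj a b ↔ ∃ e, ∃ i : Fin d, P e i.castSucc = a ∧ P e i.succ = b)

/-- The inverse sequence of finite connected simple graphs `X_n` with even
subdivisions `X*_n` and simplicial bonding surjections `f_n : X_{n+1} → X*_n`
mapping every edge onto an edge, together with coherent base vertices `x_n`. -/
structure GraphTower where
  V : ℕ → Type
  S : ℕ → Type
  finV : ∀ n, Finite (V n)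
  G : ∀ n, SimpleGraph (V n)
  conn : ∀ n, (G n).Connected
  d : ℕ → ℕ
  two_le_d : ∀ n, 2 ≤ d n
  Gs : ∀ n, SimpleGraph (V n ⊕ S n)
  subdiv : ∀ n, IsEvenSubdivision (G n) (d n) (Gs n)
  f : ∀ n, V (n + 1) → V n ⊕ S n
  f_surj : ∀ n, Function.Surjective (f n)
  f_simplicial : ∀ n ⦃u v⦄, (G (n + 1)).Adj u v → (Gs n).Adj (f n u) (f n v)
  f_edge_surj : ∀ n ⦃a b⦄, (Gs n).Adj a b →
    ∃ u v, (G (n + 1)).Adj u v ∧ f n u = a ∧ f n v = b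
  x : ∀ n, V n
  f_base : ∀ n, f n (x (n + 1)) = Sum.inl (x n)

namespace GraphTower

/-- The projection `φ_n = DRC_n`. -/
def phi (T : GraphTower) (n : ℕ) : List (T.V (n + 1)) → List (T.V n) := DRC (T.f n)

/-- The composite projection `φ_n ∘ φ_{n+1} ∘ ⋯ ∘ φ_{n+m-1}` (the identity for `m = 0`). -/
def proj (T : GraphTower) (n : ℕ) : (m : ℕ) → List (T.V (n + m)) → List (T.V n)
  | 0, w => w
  | m + 1, w => T.proj n m (T.phi (n + m) w)

/-- Membership in `Ω = lim←(Ω_n, φ_n)`: a coherent sequence of loop words. -/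
def MemOmega (T : GraphTower) (ω : ∀ n, List (T.V n)) : Prop :=
  (∀ n, IsLoopWord (T.G n) (T.x n) (ω n)) ∧ ∀ n, T.phi n (ω (n + 1)) = ω n

/-- Membership in `G = lim←(Ω'_n, φ'_n)`: a `φ'`-coherent sequence of reduced loop words. -/
def MemG (T : GraphTower) (g : ∀ n, List (T.V n)) : Prop :=
  (∀ n, IsLoopWord (T.G n) (T.x n) (g n) ∧ IsReduced (g n)) ∧
    ∀ n, reduce (T.phi n (g (n + 1))) = g n

/-- A sequence is locally eventually constant if for every fixed level `n` the
unreduced projections of its later terms to level `n` are eventually constant. -/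
def LEC (T : GraphTower) (g : ∀ n, List (T.V n)) : Prop :=
  ∀ n, ∃ M, ∀ m, M ≤ m → T.proj n m (g (n + m)) = T.proj n M (g (n + M))

/-- `ω` is the stabilization `←g` of `g`: for every level `n`, the projections of
the later terms of `g` to level `n` eventually equal `ω n`. -/
def IsStabilization (T : GraphTower) (g ω : ∀ n, List (T.V n)) : Prop :=
  ∀ n, ∃ M, ∀ m, M ≤ m → T.proj n m (g (n + m)) = ω n

/-- The identity word sequence `(x_n)_n`. -/
def seqOne (T : GraphTower) : ∀ n, List (T.V n) := fun n => [T.x n]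

/-- Termwise concatenation followed by termwise reduction. -/
def seqMul (T : GraphTower) (g h : ∀ n, List (T.V n)) : ∀ n, List (T.V n) :=
  fun n => reduce (lconcat (g n) (h n))

/-- Termwise reversal. -/
def seqInv (T : GraphTower) (g : ∀ n, List (T.V n)) : ∀ n, List (T.V n) :=
  fun n => (g n).reverse

/-- Membership in `←𝒢`: the stabilization of some locally eventually constant
element of `G`. -/
def MemSG (T : GraphTower) (ω : ∀ n, List (T.V n)) : Prop :=
  ∃ g, T.MemG g ∧ T.LEC g ∧ T.IsStabilization g ω

/-- `τ = ω ∗ ξ`: termwise concatenation, followed by termwise reduction,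
followed by stabilization. -/
def star (T : GraphTower) (ω ξ τ : ∀ n, List (T.V n)) : Prop :=
  T.IsStabilization (fun n => reduce (lconcat (ω n) (ξ n))) τ

end GraphTower

end GCG

/-!
Reduction only deletes letters and every `φ_n` is monotone for the sublist order, so (i)
follows from `ω'_k` being a sublist of `ω_k` and `φ_n ∘ ⋯ ∘ φ_{k-1}(ω_k) = ω_n`. For (ii), `φ_k` sends a backtrack
`u v u` at level `k + 1` to at most one backtrack at level `k`: when `f_k(u)` is a subdivision
point, the letters of `X_k` met just before `v`, at `v`, and just after `v` all lie among the two
ends of the subdivided edge. Hence `ω_k = φ_k(ω_{k+1})` reduces to `φ_k(ω'_{k+1})`, and by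
confluence of backtrack reduction its normal form `ω'_k` is a sublist of that word.
-/

theorem List.Sublist.dropWhile {α : Type*} {l₁ l₂ : List α} (p : α → Bool)
    (h : l₁.Sublist l₂) : (l₁.dropWhile p).Sublist (l₂.dropWhile p) := by
  induction h with
  | slnil => exact .slnil
  | @cons l₁ l₂ a _ ih =>
    by_cases ha : p a
    · simpa [ha] using ih
    · simpa [ha] using (ih.trans (List.dropWhile_sublist p)).trans (List.sublist_cons_self a l₂)
  | cons_cons a h ih => by_cases ha : p a <;> simp [ha, ih, h]

theorem List.mem_of_head?_append_cons {α : Type*} {p q : List α} {u x : α}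
    (h : (p ++ u :: q).head? = some x) (hu : u ≠ x) : x ∈ p := by
  cases p <;> simp_all

theorem List.mem_of_getLast?_append_cons {α : Type*} {p s : List α} {u x : α}
    (h : (p ++ u :: s).getLast? = some x) (hu : u ≠ x) : x ∈ s := by
  rw [List.getLast?_append_of_ne_nil _ (List.cons_ne_nil u s)] at h
  exact (List.mem_cons.1 (List.mem_of_getLast? h)).resolve_left hu.symm

theorem List.dropWhile_dropWhile {α : Type*} (p : α → Bool) (l : List α) :
    (l.dropWhile p).dropWhile p = l.dropWhile p := by
  induction l with
  | nil => rfl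
  | cons a l ih => by_cases ha : p a <;> simp [ha, ih]

namespace GCG

open Relation

variable {V : Type*}

theorem compress_cons (a : V) (l : List V) :
    compress (a :: l) = a :: (compress l).dropWhile (· = a) := by
  induction l generalizing a with
  | nil => rfl
  | cons b t ih =>
    rw [compress, ih b]
    by_cases hab : a = b
    · subst hab
      simp [List.dropWhile_dropWhile]
    · simp [hab, Ne.symm hab]

theorem compress_sublist_compress_cons (a : V) (l : List V) :
    (compress l).Sublist (compress (a :: l)) := by
  cases l with
  | nil => exact List.nil_sublist _
  | cons b t =>
    rw [compress]
    split
    · exact List.Sublist.refl _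
    · exact List.sublist_cons_self _ _

theorem compress_sublist_compress {l₁ l₂ : List V} (h : l₁.Sublist l₂) :
    (compress l₁).Sublist (compress l₂) := by
  induction h with
  | slnil => exact .slnil
  | cons a _ ih => exact ih.trans (compress_sublist_compress_cons a _)
  | cons_cons a _ ih =>
    rw [compress_cons, compress_cons]
    exact (ih.dropWhile _).cons_cons a

theorem exists_compress_append_cons (X : List V) (a : V) :
    ∃ C, ∀ Y, compress (X ++ a :: Y) = C ++ compress (a :: Y) := by
  induction X with
  | nil => exact ⟨[], fun _ => rfl⟩
  | cons x X ih =>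
    cases X with
    | nil =>
      exact ⟨if x = a then [] else [x], fun Y => by by_cases h : x = a <;> simp [compress, h]⟩
    | cons y X =>
      obtain ⟨C, hC⟩ := ih
      simp only [List.cons_append] at hC
      exact ⟨if x = y then C else x :: C, fun Y => by
        by_cases h : x = y <;> simp [compress, h, hC]⟩

theorem compress_append_cons_cons (X : List V) (a : V) (Y : List V) :
    compress (X ++ a :: a :: Y) = compress (X ++ a :: Y) := by
  obtain ⟨C, hC⟩ := exists_compress_append_cons X a
  rw [hC, hC, compress, if_pos rfl]

theorem reflTransGen_compress_backtrack (X : List V) (a b : V) (Y : List V) :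
    ReflTransGen ReduceStep (compress (X ++ a :: b :: a :: Y)) (compress (X ++ a :: Y)) := by
  by_cases hab : a = b
  · subst hab
    rw [compress_append_cons_cons, compress_append_cons_cons]
  obtain ⟨C, hC⟩ := exists_compress_append_cons X a
  rw [hC, hC, compress_cons a (b :: a :: Y), compress_cons b, compress_cons a Y]
  exact .single ⟨C, (compress Y).dropWhile (· = a), a, b, by simp [hab, Ne.symm hab], by simp⟩

theorem reflTransGen_compress_append_cons {A B : List V} {a a' b : V}
    (hA : A.getLast? = some a) (hB : B.head? = some a') (h : a = b ∨ a' = b ∨ a = a') :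
    ReflTransGen ReduceStep (compress (A ++ b :: B)) (compress (A ++ B)) := by
  obtain ⟨A, rfl⟩ := List.getLast?_eq_some_iff.1 hA
  obtain ⟨B, rfl⟩ : ∃ B', B = a' :: B' := by
    cases B with
    | nil => simp at hB
    | cons c B => exact ⟨B, by simpa using hB⟩
  simp only [List.append_assoc, List.singleton_append]
  rcases h with rfl | rfl | rfl
  · rw [compress_append_cons_cons]
  · have h := compress_append_cons_cons (A ++ [a]) a' B
    simp only [List.append_assoc, List.singleton_append] at h
    rw [h]
  · rw [compress_append_cons_cons]
    exact reflTransGen_compress_backtrack A a b B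

theorem ReduceStep.sublist {l r : List V} (h : ReduceStep l r) : r.Sublist l := by
  obtain ⟨p, s, u, v, rfl, rfl⟩ := h
  simp

theorem ReduceStep.cons {l r : List V} (x : V) (h : ReduceStep l r) :
    ReduceStep (x :: l) (x :: r) := by
  obtain ⟨p, s, u, v, rfl, rfl⟩ := h
  exact ⟨x :: p, s, u, v, rfl, rfl⟩

theorem sublist_of_reflTransGen_reduceStep {l r : List V}
    (h : ReflTransGen ReduceStep l r) : r.Sublist l := by
  induction h with
  | refl => exact List.Sublist.refl _
  | tail _ hstep ih => exact hstep.sublist.trans ih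

theorem exists_reflTransGen_isReduced (l : List V) :
    ∃ r, ReflTransGen ReduceStep l r ∧ IsReduced r := by
  by_cases h : IsReduced l
  · exact ⟨l, .refl, h⟩
  · obtain ⟨r, hr⟩ : ∃ r, ReduceStep l r := by simpa [IsReduced] using h
    have : r.length < l.length := by
      obtain ⟨p, s, u, v, rfl, rfl⟩ := hr
      simp
    obtain ⟨r', h1, h2⟩ := exists_reflTransGen_isReduced r
    exact ⟨r', .head hr h1, h2⟩
termination_by l.length

theorem reflTransGen_reduce (l : List V) : ReflTransGen ReduceStep l (reduce l) := by
  rw [reduce, dif_pos (exists_reflTransGen_isReduced l)]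
  exact (exists_reflTransGen_isReduced l).choose_spec.1

theorem isReduced_reduce (l : List V) : IsReduced (reduce l) := by
  rw [reduce, dif_pos (exists_reflTransGen_isReduced l)]
  exact (exists_reflTransGen_isReduced l).choose_spec.2

theorem reduce_sublist (l : List V) : (reduce l).Sublist l :=
  sublist_of_reflTransGen_reduceStep (reflTransGen_reduce l)

theorem IsReduced.eq_of_reflTransGen {r q : List V} (hr : IsReduced r)
    (h : ReflTransGen ReduceStep r q) : q = r := by
  rcases h.cases_head with h | ⟨c, hc, _⟩
  · exact h.symm
  · exact absurd hc (hr c)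

theorem reduceStep_join_of_nil_prefix {u₁ v₁ u₂ v₂ : V} {s₁ p₂ s₂ : List V}
    (h : [u₁, v₁, u₁] ++ s₁ = p₂ ++ [u₂, v₂, u₂] ++ s₂) :
    ∃ q, ReflGen ReduceStep ([u₁] ++ s₁) q ∧ ReflGen ReduceStep (p₂ ++ [u₂] ++ s₂) q := by
  match p₂, h with
  | [], h =>
    simp only [List.nil_append, List.cons_append, List.cons.injEq] at h
    obtain ⟨rfl, rfl, _, rfl⟩ := h
    exact ⟨_, .refl, .refl⟩
  | [_], h =>
    simp only [List.cons_append, List.nil_append, List.cons.injEq] at h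
    obtain ⟨rfl, rfl, rfl, rfl⟩ := h
    exact ⟨_, .refl, .refl⟩
  | [_, _], h =>
    simp only [List.cons_append, List.nil_append, List.cons.injEq] at h
    obtain ⟨rfl, rfl, rfl, rfl⟩ := h
    exact ⟨[u₁] ++ s₂, .single ⟨[], s₂, u₁, v₂, rfl, rfl⟩,
      .single ⟨[], s₂, u₁, v₁, rfl, rfl⟩⟩
  | _ :: _ :: _ :: p₂, h =>
    simp only [List.cons_append, List.nil_append, List.cons.injEq] at h
    obtain ⟨rfl, rfl, rfl, rfl⟩ := h
    exact ⟨[u₁] ++ p₂ ++ [u₂] ++ s₂, .single ⟨[u₁] ++ p₂, s₂, u₂, v₂, by simp, rfl⟩,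
      .single ⟨[], p₂ ++ [u₂] ++ s₂, u₁, v₁, by simp, by simp⟩⟩

theorem reduceStep_join {u₁ v₁ u₂ v₂ : V} {p₁ s₁ p₂ s₂ : List V}
    (h : p₁ ++ [u₁, v₁, u₁] ++ s₁ = p₂ ++ [u₂, v₂, u₂] ++ s₂) :
    ∃ q, ReflGen ReduceStep (p₁ ++ [u₁] ++ s₁) q ∧ ReflGen ReduceStep (p₂ ++ [u₂] ++ s₂) q := by
  induction p₁ generalizing p₂ with
  | nil => exact reduceStep_join_of_nil_prefix h
  | cons x p₁ ih =>
    cases p₂ with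
    | nil =>
      obtain ⟨q, h₁, h₂⟩ := reduceStep_join_of_nil_prefix h.symm
      exact ⟨q, h₂, h₁⟩
    | cons y p₂ =>
      simp only [List.cons_append, List.cons.injEq] at h
      obtain ⟨rfl, h⟩ := h
      obtain ⟨q, h₁, h₂⟩ := ih (by simpa using h)
      refine ⟨x :: q, ?_, ?_⟩
      · cases h₁ with
        | refl => exact .refl
        | single h₁ => exact .single (by simpa using h₁.cons x)
      · cases h₂ with
        | refl => exact .refl
        | single h₂ => exact .single (by simpa using h₂.cons x)

/-- By confluence of backtrack reduction, `reduce l` is the normal form of every reduct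
of `l`, hence a sublist of it. -/
theorem reduce_sublist_of_reflTransGen {l q : List V} (h : ReflTransGen ReduceStep l q) :
    (reduce l).Sublist q := by
  have hlocal : ∀ a b c : List V, ReduceStep a b → ReduceStep a c →
      ∃ d, ReflGen ReduceStep b d ∧ ReflTransGen ReduceStep c d := by
    rintro _ _ _ ⟨p₁, s₁, u₁, v₁, rfl, rfl⟩ ⟨p₂, s₂, u₂, v₂, h, rfl⟩
    obtain ⟨d, h₁, h₂⟩ := reduceStep_join h
    exact ⟨d, h₁, h₂.to_reflTransGen⟩
  obtain ⟨d, hqd, hrd⟩ := church_rosser hlocal h (reflTransGen_reduce l)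
  rw [← (isReduced_reduce l).eq_of_reflTransGen hrd]
  exact sublist_of_reflTransGen_reduceStep hqd

theorem ReduceStep.isLoopWord {G : SimpleGraph V} {x : V} {l r : List V}
    (hl : IsLoopWord G x l) (h : ReduceStep l r) : IsLoopWord G x r := by
  obtain ⟨p, s, u, v, rfl, rfl⟩ := h
  obtain ⟨hchain, hhead, hlast⟩ := hl
  replace hchain : (p ++ [u, v, u] ++ s).IsChain G.Adj := hchain
  refine ⟨?_, ?_, ?_⟩
  · exact (hchain.prefix (l₁ := p ++ [u]) ⟨[v, u] ++ s, by simp⟩).append_overlap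
      (hchain.suffix (l₁ := [u] ++ s) ⟨p ++ [u, v], by simp⟩) (by simp)
  · cases p <;> simpa using hhead
  · cases s <;> simpa using hlast

theorem IsLoopWord.of_reflTransGen {G : SimpleGraph V} {x : V} {l r : List V}
    (hl : IsLoopWord G x l) (h : ReflTransGen ReduceStep l r) : IsLoopWord G x r := by
  induction h with
  | refl => exact hl
  | tail _ hstep ih => exact hstep.isLoopWord ih

section Subdivision

variable {S : Type*} {G : SimpleGraph V} {d : ℕ} {Gs : SimpleGraph (V ⊕ S)}
  {P : G.Dart → Fin (d + 1) → V ⊕ S}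

theorem eq_or_eq_of_inl_mem_range (hP0 : ∀ e, P e 0 = Sum.inl e.toProd.1)
    (hPlast : ∀ e, P e (Fin.last d) = Sum.inl e.toProd.2)
    (hPint : ∀ e (i : Fin (d + 1)), 0 < i.val → i.val < d → ∃ s : S, P e i = Sum.inr s)
    {e : G.Dart} {a : V} (h : Sum.inl a ∈ Set.range (P e)) :
    a = e.toProd.1 ∨ a = e.toProd.2 := by
  obtain ⟨i, hi⟩ := h
  by_cases h0 : i = 0
  · rw [h0, hP0] at hi
    exact .inl (Sum.inl_injective hi).symm
  by_cases hlast : i = Fin.last d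
  · rw [hlast, hPlast] at hi
    exact .inr (Sum.inl_injective hi).symm
  obtain ⟨s, hs⟩ := hPint e i (Fin.pos_iff_ne_zero.2 h0) (Fin.val_lt_last hlast)
  simp [hs] at hi

theorem mem_range_of_adj_inr (hP0 : ∀ e, P e 0 = Sum.inl e.toProd.1)
    (hPlast : ∀ e, P e (Fin.last d) = Sum.inl e.toProd.2)
    (hPsymm : ∀ e (i : Fin (d + 1)), P e.symm i = P e i.rev)
    (hPdisj : ∀ e e' (i i' : Fin (d + 1)), 0 < i.val → i.val < d → P e i = P e' i' →
      (e' = e ∧ i' = i) ∨ (e' = e.symm ∧ i' = i.rev))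
    (hPadj : ∀ a b, Gs.Adj a b ↔ ∃ e, ∃ i : Fin d, P e i.castSucc = a ∧ P e i.succ = b)
    {e : G.Dart} {t : S} {y : V ⊕ S} (ht : Sum.inr t ∈ Set.range (P e))
    (hadj : Gs.Adj (Sum.inr t) y) : y ∈ Set.range (P e) := by
  obtain ⟨i, hi⟩ := ht
  have h0 : i ≠ 0 := by rintro rfl; simp [hP0] at hi
  have hlast : i ≠ Fin.last d := by rintro rfl; simp [hPlast] at hi
  obtain ⟨e', j, hj, rfl⟩ := (hPadj _ _).1 hadj
  rcases hPdisj e e' i j.castSucc (Fin.pos_iff_ne_zero.2 h0) (Fin.val_lt_last hlast)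
    (hi.trans hj.symm) with ⟨rfl, -⟩ | ⟨rfl, -⟩
  · exact ⟨j.succ, rfl⟩
  · exact ⟨j.succ.rev, (hPsymm e _).symm⟩

theorem eq_or_eq_of_head?_filterMap_getLeft? (hP0 : ∀ e, P e 0 = Sum.inl e.toProd.1)
    (hPlast : ∀ e, P e (Fin.last d) = Sum.inl e.toProd.2)
    (hPint : ∀ e (i : Fin (d + 1)), 0 < i.val → i.val < d → ∃ s : S, P e i = Sum.inr s)
    (hPsymm : ∀ e (i : Fin (d + 1)), P e.symm i = P e i.rev)
    (hPdisj : ∀ e e' (i i' : Fin (d + 1)), 0 < i.val → i.val < d → P e i = P e' i' →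
      (e' = e ∧ i' = i) ∨ (e' = e.symm ∧ i' = i.rev))
    (hPadj : ∀ a b, Gs.Adj a b ↔ ∃ e, ∃ i : Fin d, P e i.castSucc = a ∧ P e i.succ = b)
    {e : G.Dart} (w : List (V ⊕ S)) {z : V ⊕ S} (hz : z ∈ Set.range (P e))
    (hw : (z :: w).IsChain Gs.Adj) {a : V}
    (ha : ((z :: w).filterMap Sum.getLeft?).head? = some a) :
    a = e.toProd.1 ∨ a = e.toProd.2 := by
  rcases z with b | t
  · simp only [List.filterMap_cons, Sum.getLeft?_inl, List.head?_cons, Option.some_inj] at ha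
    exact ha ▸ eq_or_eq_of_inl_mem_range hP0 hPlast hPint hz
  induction w generalizing t with
  | nil => simp at ha
  | cons y w ih =>
    obtain ⟨hadj, hw⟩ := List.isChain_cons_cons.1 hw
    have hy := mem_range_of_adj_inr hP0 hPlast hPsymm hPdisj hPadj hz hadj
    rcases y with b | t'
    · simp only [List.filterMap_cons, Sum.getLeft?_inr, Sum.getLeft?_inl, List.head?_cons,
        Option.some_inj] at ha
      exact ha ▸ eq_or_eq_of_inl_mem_range hP0 hPlast hPint hy
    · exact ih (t := t') hy hw (by simpa [List.findSome?_cons] using ha)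

/-- `(w.filterMap Sum.getLeft?).head?` is the first vertex of `G` on the walk `w`; `c` and `c'`
are the ends of the edge subdivided at `t`. -/
theorem IsEvenSubdivision.exists_eq_or_eq_of_head?_filterMap_getLeft?
    (hGs : IsEvenSubdivision G d Gs) (t : S) :
    ∃ c c' : V, ∀ w : List (V ⊕ S), (Sum.inr t :: w).IsChain Gs.Adj →
      ∀ {a : V}, (w.filterMap Sum.getLeft?).head? = some a → a = c ∨ a = c' := by
  obtain ⟨P, hP0, hPlast, hPint, -, hPsymm, hPsurj, hPdisj, hPadj⟩ := hGs
  obtain ⟨e, i, hi⟩ := hPsurj t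
  exact ⟨_, _, fun w hw a ha => eq_or_eq_of_head?_filterMap_getLeft? hP0 hPlast hPint hPsymm
    hPdisj hPadj w ⟨i, hi⟩ hw (by simpa [List.findSome?_cons] using ha)⟩

end Subdivision

theorem reflTransGen_DRC_of_reduceStep {V' S : Type*} {G' : SimpleGraph V'}
    {G : SimpleGraph V} {d : ℕ} {Gs : SimpleGraph (V ⊕ S)} (hGs : IsEvenSubdivision G d Gs)
    {f : V' → V ⊕ S} (hf : ∀ ⦃u v⦄, G'.Adj u v → Gs.Adj (f u) (f v)) {x' : V'} {x : V}
    (hx : f x' = Sum.inl x) {l r : List V'} (hl : IsLoopWord G' x' l) (h : ReduceStep l r) :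
    ReflTransGen ReduceStep (DRC f l) (DRC f r) := by
  obtain ⟨p, s, u, v, rfl, rfl⟩ := h
  obtain ⟨hchain, hhead, hlast⟩ := hl
  replace hchain : (p ++ [u, v, u] ++ s).IsChain G'.Adj := hchain
  have huv : G'.Adj u v := (List.isChain_cons_cons.1 (hchain.infix ⟨p, s, rfl⟩)).1
  rcases hfu : f u with a | t <;> rcases hfv : f v with b | t'
  · simpa [DRC, hfu, hfv] using reflTransGen_compress_backtrack _ a b _
  · simpa [DRC, hfu, hfv, compress_append_cons_cons] using ReflTransGen.refl
  · have hux : u ≠ x' := by rintro rfl; simp [hx] at hfu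
    have hxp : x' ∈ p :=
      List.mem_of_head?_append_cons (q := [v, u] ++ s) (by simpa using hhead) hux
    have hxs : x' ∈ s :=
      List.mem_of_getLast?_append_cons (p := p ++ [u, v]) (by simpa using hlast) hux
    have hxF : ∀ {w : List V'}, x' ∈ w → (w.filterMap fun z => (f z).getLeft?) ≠ [] :=
      fun hw => List.ne_nil_of_mem (a := x) (List.mem_filterMap.2 ⟨x', hw, by simp [hx]⟩)
    obtain ⟨aL, haL⟩ := Option.ne_none_iff_exists'.1
      (List.getLast?_eq_none_iff.not.2 (hxF hxp))
    obtain ⟨aR, haR⟩ := Option.ne_none_iff_exists'.1 (List.head?_eq_none_iff.not.2 (hxF hxs))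
    obtain ⟨c, c', hexit⟩ := hGs.exists_eq_or_eq_of_head?_filterMap_getLeft? t
    have hL : aL = c ∨ aL = c' := by
      refine hexit (p.reverse.map f) ?_ (by simpa [List.filterMap_map] using haL)
      have := List.isChain_map_of_isChain f hf
        (hchain.prefix (l₁ := p ++ [u]) ⟨[v, u] ++ s, by simp⟩)
      simpa [hfu, SimpleGraph.adj_comm] using List.isChain_reverse.2 this
    have hR : aR = c ∨ aR = c' := by
      refine hexit (s.map f) ?_ (by simpa [List.filterMap_map] using haR)
      simpa [hfu] using
        List.isChain_map_of_isChain f hf (hchain.suffix (l₁ := u :: s) ⟨p ++ [u, v], by simp⟩)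
    have hb : b = c ∨ b = c' := hexit [Sum.inl b] (by simpa [hfu, hfv] using hf huv) rfl
    simp only [DRC, List.filterMap_append, List.filterMap_cons, hfu, hfv, Sum.getLeft?_inl,
      Sum.getLeft?_inr, List.filterMap_nil, List.singleton_append,
      List.append_assoc]
    refine reflTransGen_compress_append_cons haL haR ?_
    rcases hL with rfl | rfl <;> rcases hR with rfl | rfl <;> rcases hb with rfl | rfl <;> simp
  · simpa [DRC, hfu, hfv] using ReflTransGen.refl

theorem reflTransGen_DRC {V' S : Type*} {G' : SimpleGraph V'} {G : SimpleGraph V} {d : ℕ}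
    {Gs : SimpleGraph (V ⊕ S)} (hGs : IsEvenSubdivision G d Gs) {f : V' → V ⊕ S}
    (hf : ∀ ⦃u v⦄, G'.Adj u v → Gs.Adj (f u) (f v)) {x' : V'} {x : V}
    (hx : f x' = Sum.inl x) {l r : List V'} (hl : IsLoopWord G' x' l)
    (h : ReflTransGen ReduceStep l r) : ReflTransGen ReduceStep (DRC f l) (DRC f r) := by
  induction h with
  | refl => exact .refl
  | tail hlq hstep ih =>
    exact ih.trans (reflTransGen_DRC_of_reduceStep hGs hf hx (hl.of_reflTransGen hlq) hstep)

namespace GraphTower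

theorem proj_sublist_proj (T : GraphTower) (n : ℕ) :
    ∀ m {l₁ l₂ : List (T.V (n + m))}, l₁.Sublist l₂ → (T.proj n m l₁).Sublist (T.proj n m l₂)
  | 0, _, _, h => h
  | m + 1, _, _, h => T.proj_sublist_proj n m (compress_sublist_compress (h.filterMap _))

theorem proj_eq_of_coherent (T : GraphTower) {ω : ∀ n, List (T.V n)}
    (hω : ∀ n, T.phi n (ω (n + 1)) = ω n) (n : ℕ) : ∀ m, T.proj n m (ω (n + m)) = ω n
  | 0 => rfl
  | m + 1 => (congrArg (T.proj n m) (hω (n + m))).trans (T.proj_eq_of_coherent hω n m)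

end GraphTower

/-- For every `(ω_n)_n ∈ Ω` and all levels `n ≤ k` (here `k = n + m`):
(i) `φ_n∘⋯∘φ_{k−1}(ω'_k)` is a sublist (subsequence) of `ω_n`, and
(ii) `φ_n∘⋯∘φ_{k−1}(ω'_k)` is a sublist of `φ_n∘⋯∘φ_k(ω'_{k+1})`.
(For `m = 0` the composite projection is the identity.) -/
theorem statement_2 (T : GraphTower) (ω : ∀ n, List (T.V n)) (hω : T.MemOmega ω)
    (n m : ℕ) :
    (T.proj n m (reduce (ω (n + m)))).Sublist (ω n) ∧
    (T.proj n m (reduce (ω (n + m)))).Sublist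
      (T.proj n (m + 1) (reduce (ω (n + m + 1)))) := by
  obtain ⟨hloop, hcoh⟩ := hω
  refine ⟨?_, ?_⟩
  · rw [← T.proj_eq_of_coherent hcoh n m]
    exact T.proj_sublist_proj n m (reduce_sublist _)
  · refine T.proj_sublist_proj n m (reduce_sublist_of_reflTransGen ?_)
    rw [← hcoh (n + m)]
    exact reflTransGen_DRC (T.subdiv _) (T.f_simplicial _) (T.f_base _) (hloop _)
      (reflTransGen_reduce _)

end GCG
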